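/- arXiv:2512.10204 — 2 statements merged into one kernel-verified Lean document; each statement's English description precedes it below -/
import Mathlib

section
/- Let X be a real Banach space, let Ψ : X → ℝ be locally Lipschitz continuous, and let α ≥ 0. Then the following two conditions are equivalent: (i) Ψ⁰(v₁; v₂ − v₁) + Ψ⁰(v₂; v₁ − v₂) ≤ α‖v₁ − v₂‖² for all v₁, v₂ ∈ X; (ii) ⟨ξ₁ − ξ₂, v₁ − v₂⟩ ≥ −α‖v₁ − v₂‖² for all v₁, v₂ ∈ X and all ξ₁ ∈ ∂Ψ(v₁), ξ₂ ∈ ∂Ψ(v₂) (the relaxed monotonicity condition). -/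
open Filter Topology

/-- The Clarke (generalized) directional derivative of `f` at `u` in direction `v`. -/
noncomputable def clarkeDeriv {X : Type*} [NormedAddCommGroup X] [NormedSpace ℝ X]
    (f : X → ℝ) (u v : X) : ℝ :=
  Filter.limsup (fun p : X × ℝ => (f (p.1 + p.2 • v) - f p.1) / p.2)
    ((𝓝 u) ×ˢ 𝓝[>] (0:ℝ))

/-- The Clarke subdifferential of `f` at `u`, as a subset of the topological dual. -/
def clarkeSubdiff {X : Type*} [NormedAddCommGroup X] [NormedSpace ℝ X]
    (f : X → ℝ) (u : X) : Set (X →L[ℝ] ℝ) :=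
  {ξ | ∀ v : X, ξ v ≤ clarkeDeriv f u v}

/-! The Clarke derivative `N = Ψ⁰(u; ·)` is sublinear and bounded by `L‖·‖` near a point where `Ψ`
is `L`-Lipschitz, so by Hahn–Banach the value `N v` is attained as `ξ v` by some `ξ ∈ ∂Ψ(u)`, while
`ξ v ≤ N v` for every `ξ ∈ ∂Ψ(u)`. Since `(ξ₁ - ξ₂)(v₁ - v₂) = -(ξ₁ (v₂ - v₁) + ξ₂ (v₁ - v₂))`, the
infimum of the left-hand side over `ξ₁ ∈ ∂Ψ(v₁)`, `ξ₂ ∈ ∂Ψ(v₂)` is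
`-(Ψ⁰(v₁; v₂ - v₁) + Ψ⁰(v₂; v₁ - v₂))`, and both conditions bound it below by `-α‖v₁ - v₂‖²`. -/

section LimsupBounds

variable {α : Type*} {F : Filter α} {g : α → ℝ} {c : ℝ}

lemma Filter.isBoundedUnder_le_of_eventually_abs_le (h : ∀ᶠ x in F, |g x| ≤ c) :
    F.IsBoundedUnder (· ≤ ·) g :=
  isBoundedUnder_of_eventually_le (h.mono fun _ hx => (abs_le.1 hx).2)

lemma Filter.isBoundedUnder_ge_of_eventually_abs_le (h : ∀ᶠ x in F, |g x| ≤ c) :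
    F.IsBoundedUnder (· ≥ ·) g :=
  isBoundedUnder_of_eventually_ge (h.mono fun _ hx => (abs_le.1 hx).1)

lemma Filter.limsup_comp_le_of_tendsto [F.NeBot] {m : α → α} (hm : Tendsto m F F)
    (h : ∀ᶠ x in F, |g x| ≤ c) : limsup (g ∘ m) F ≤ limsup g F := by
  rw [limsup_comp]
  exact limsup_le_limsup_of_le hm
    (isBoundedUnder_ge_of_eventually_abs_le (hm.eventually h)).isCoboundedUnder_le
    (isBoundedUnder_le_of_eventually_abs_le h)

end LimsupBounds

theorem exists_continuousLinearMap_le_sublinear_apply_eq {X : Type*} [NormedAddCommGroup X]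
    [NormedSpace ℝ X] {N : X → ℝ} (N_hom : ∀ c : ℝ, 0 < c → ∀ x, N (c • x) = c * N x)
    (N_add : ∀ x y, N (x + y) ≤ N x + N y) {C : ℝ} (N_le : ∀ x, N x ≤ C * ‖x‖) (v : X) :
    ∃ ξ : X →L[ℝ] ℝ, (∀ x, ξ x ≤ N x) ∧ ξ v = N v := by
  have N_zero : N 0 = 0 := by
    have h := N_hom 2 two_pos 0
    rw [smul_zero] at h
    linarith
  have le_N_smul : ∀ t : ℝ, t * N v ≤ N (t • v) := by
    intro t
    rcases lt_trichotomy t 0 with ht | rfl | ht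
    · have h := N_add (t • v) ((-t) • v)
      rw [← add_smul, add_neg_cancel, zero_smul, N_zero, N_hom _ (neg_pos.2 ht)] at h
      linarith
    · simp [N_zero]
    · rw [N_hom t ht]
  let f : X →ₗ.[ℝ] ℝ := LinearPMap.mkSpanSingleton' v (N v) fun c hc => by
    rcases smul_eq_zero.1 hc with rfl | rfl
    · exact zero_smul _ _
    · rw [N_zero, smul_zero]
  obtain ⟨g, hgf, hgN⟩ := exists_extension_of_le_sublinear f N N_hom N_add <| by
    rintro ⟨x, hx⟩
    obtain ⟨t, rfl⟩ := Submodule.mem_span_singleton.1 hx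
    rw [LinearPMap.mkSpanSingleton'_apply, smul_eq_mul]
    exact le_N_smul t
  have g_bound : ∀ x, ‖g x‖ ≤ C * ‖x‖ := fun x => by
    rw [Real.norm_eq_abs, abs_le]
    constructor
    · linarith [map_neg g x ▸ hgN (-x), norm_neg x ▸ N_le (-x)]
    · exact (hgN x).trans (N_le x)
  exact ⟨g.mkContinuous C g_bound, hgN, (hgf ⟨v, Submodule.mem_span_singleton_self v⟩).trans
    (LinearPMap.mkSpanSingleton'_apply_self (R := ℝ) v (N v) _ _)⟩

lemma tendsto_rescale_nhds_prod_nhdsGT {Y : Type*} [TopologicalSpace Y] (u : Y) {c : ℝ}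
    (hc : 0 < c) :
    Tendsto (fun p : Y × ℝ => (p.1, c * p.2)) (𝓝 u ×ˢ 𝓝[>] (0 : ℝ)) (𝓝 u ×ˢ 𝓝[>] (0 : ℝ)) :=
  tendsto_fst.prodMk <| (tendsto_iff_comap.2 (comap_mulLeft_nhdsGT_zero hc).ge).comp tendsto_snd

section ClarkeDeriv

variable {X : Type*} [NormedAddCommGroup X] [NormedSpace ℝ X]

noncomputable def clarkeQuotient (f : X → ℝ) (v : X) (p : X × ℝ) : ℝ :=
  (f (p.1 + p.2 • v) - f p.1) / p.2

lemma clarkeDeriv_eq_limsup (f : X → ℝ) (u v : X) :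
    clarkeDeriv f u v = limsup (clarkeQuotient f v) (𝓝 u ×ˢ 𝓝[>] (0 : ℝ)) :=
  rfl

lemma tendsto_fst_add_snd_smul (u v : X) :
    Tendsto (fun p : X × ℝ => p.1 + p.2 • v) (𝓝 u ×ˢ 𝓝[>] (0 : ℝ)) (𝓝 u) := by
  have h : Tendsto (fun p : X × ℝ => p.2) (𝓝 u ×ˢ 𝓝[>] (0 : ℝ)) (𝓝 0) :=
    tendsto_snd.mono_right nhdsWithin_le_nhds
  simpa using tendsto_fst.add (h.smul_const v)

lemma tendsto_shift_nhds_prod_nhdsGT (u v : X) :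
    Tendsto (fun p : X × ℝ => (p.1 + p.2 • v, p.2)) (𝓝 u ×ˢ 𝓝[>] (0 : ℝ)) (𝓝 u ×ˢ 𝓝[>] (0 : ℝ)) :=
  (tendsto_fst_add_snd_smul u v).prodMk tendsto_snd

variable {f : X → ℝ} {u : X} {L : NNReal} {s : Set X}

lemma eventually_abs_clarkeQuotient_le (hs : s ∈ 𝓝 u) (hf : LipschitzOnWith L f s) (v : X) :
    ∀ᶠ p in 𝓝 u ×ˢ 𝓝[>] 0, |clarkeQuotient f v p| ≤ L * ‖v‖ := by
  filter_upwards [tendsto_fst.eventually_mem hs, (tendsto_fst_add_snd_smul u v).eventually_mem hs,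
    tendsto_snd.eventually self_mem_nhdsWithin] with ⟨w, t⟩ hw hwt (ht : 0 < t)
  rw [clarkeQuotient, abs_div, abs_of_pos ht, div_le_iff₀ ht, ← Real.dist_eq]
  calc dist (f (w + t • v)) (f w) ≤ L * dist (w + t • v) w := hf.dist_le_mul _ hwt _ hw
    _ = L * ‖v‖ * t := by
      rw [dist_eq_norm, add_sub_cancel_left, norm_smul, Real.norm_of_nonneg ht.le]
      ring

lemma clarkeDeriv_le (hs : s ∈ 𝓝 u) (hf : LipschitzOnWith L f s) (v : X) :
    clarkeDeriv f u v ≤ L * ‖v‖ := by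
  have h := eventually_abs_clarkeQuotient_le hs hf v
  exact limsup_le_of_le (isBoundedUnder_ge_of_eventually_abs_le h).isCoboundedUnder_le
    (h.mono fun _ hp => (abs_le.1 hp).2)

lemma clarkeDeriv_add_le (hs : s ∈ 𝓝 u) (hf : LipschitzOnWith L f s) (v w : X) :
    clarkeDeriv f u (v + w) ≤ clarkeDeriv f u v + clarkeDeriv f u w := by
  have hm := tendsto_shift_nhds_prod_nhdsGT u v
  have hv := eventually_abs_clarkeQuotient_le hs hf v
  have hw := eventually_abs_clarkeQuotient_le hs hf w
  have hwm := hm.eventually hw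
  have hsplit : clarkeQuotient f (v + w) =
      clarkeQuotient f v + clarkeQuotient f w ∘ (fun p : X × ℝ => (p.1 + p.2 • v, p.2)) := by
    funext p
    simp only [clarkeQuotient, Pi.add_apply, Function.comp_apply, smul_add, ← add_div, add_assoc,
      sub_add_sub_cancel']
  rw [clarkeDeriv_eq_limsup, clarkeDeriv_eq_limsup, clarkeDeriv_eq_limsup, hsplit]
  calc _ ≤ limsup (clarkeQuotient f v) (𝓝 u ×ˢ 𝓝[>] (0 : ℝ)) +
          limsup (clarkeQuotient f w ∘ fun p : X × ℝ => (p.1 + p.2 • v, p.2))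
            (𝓝 u ×ˢ 𝓝[>] (0 : ℝ)) :=
        limsup_add_le (isBoundedUnder_ge_of_eventually_abs_le hv)
          (isBoundedUnder_le_of_eventually_abs_le hv)
          (isBoundedUnder_ge_of_eventually_abs_le hwm).isCoboundedUnder_le
          (isBoundedUnder_le_of_eventually_abs_le hwm)
    _ ≤ _ := by gcongr; exact limsup_comp_le_of_tendsto hm hw

lemma clarkeDeriv_smul_le (hs : s ∈ 𝓝 u) (hf : LipschitzOnWith L f s) {c : ℝ} (hc : 0 < c)
    (v : X) : clarkeDeriv f u (c • v) ≤ c * clarkeDeriv f u v := by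
  have hm := tendsto_rescale_nhds_prod_nhdsGT u hc
  have hv := eventually_abs_clarkeQuotient_le hs hf v
  have hvm := hm.eventually hv
  have hscale : clarkeQuotient f (c • v) =
      (c * ·) ∘ clarkeQuotient f v ∘ (fun p : X × ℝ => (p.1, c * p.2)) := by
    funext p
    simp only [clarkeQuotient, Function.comp_apply, smul_smul, mul_comm p.2 c]
    rw [mul_div_assoc', mul_div_mul_left _ _ hc.ne']
  rw [clarkeDeriv_eq_limsup, clarkeDeriv_eq_limsup, hscale,
    ← (monotone_mul_left_of_nonneg hc.le).map_limsup_of_continuousAt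
      (clarkeQuotient f v ∘ fun p : X × ℝ => (p.1, c * p.2)) (continuous_const_mul c).continuousAt
      (isBoundedUnder_le_of_eventually_abs_le hvm)
      (isBoundedUnder_ge_of_eventually_abs_le hvm).isCoboundedUnder_le]
  gcongr
  exact limsup_comp_le_of_tendsto hm hv

lemma clarkeDeriv_smul (hs : s ∈ 𝓝 u) (hf : LipschitzOnWith L f s) {c : ℝ} (hc : 0 < c)
    (v : X) : clarkeDeriv f u (c • v) = c * clarkeDeriv f u v := by
  refine (clarkeDeriv_smul_le hs hf hc v).antisymm ?_
  have h := clarkeDeriv_smul_le hs hf (inv_pos.2 hc) (c • v)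
  rw [inv_smul_smul₀ hc.ne'] at h
  calc c * clarkeDeriv f u v ≤ c * (c⁻¹ * clarkeDeriv f u (c • v)) := by gcongr
    _ = clarkeDeriv f u (c • v) := by field_simp

theorem exists_mem_clarkeSubdiff_apply_eq (hs : s ∈ 𝓝 u) (hf : LipschitzOnWith L f s) (v : X) :
    ∃ ξ ∈ clarkeSubdiff f u, ξ v = clarkeDeriv f u v :=
  exists_continuousLinearMap_le_sublinear_apply_eq (fun _ hc => clarkeDeriv_smul hs hf hc)
    (clarkeDeriv_add_le hs hf) (clarkeDeriv_le hs hf) v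

end ClarkeDeriv

theorem stmt4_general {X : Type*} [NormedAddCommGroup X] [NormedSpace ℝ X]
    (Ψ : X → ℝ)
    (hΨlip : ∀ u : X, ∃ (L : NNReal) (s : Set X), s ∈ 𝓝 u ∧ LipschitzOnWith L Ψ s)
    (α : ℝ) :
    (∀ v₁ v₂ : X,
        clarkeDeriv Ψ v₁ (v₂ - v₁) + clarkeDeriv Ψ v₂ (v₁ - v₂) ≤ α * ‖v₁ - v₂‖ ^ 2) ↔
    (∀ v₁ v₂ : X, ∀ ξ₁ ∈ clarkeSubdiff Ψ v₁, ∀ ξ₂ ∈ clarkeSubdiff Ψ v₂,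
        (ξ₁ - ξ₂) (v₁ - v₂) ≥ -α * ‖v₁ - v₂‖ ^ 2) := by
  have pairing (v₁ v₂ : X) (ξ₁ ξ₂ : X →L[ℝ] ℝ) :
      (ξ₁ - ξ₂) (v₁ - v₂) = -(ξ₁ (v₂ - v₁) + ξ₂ (v₁ - v₂)) := by
    rw [sub_apply, ← neg_sub v₂ v₁, map_neg]
    ring
  constructor
  · intro h v₁ v₂ ξ₁ hξ₁ ξ₂ hξ₂
    rw [pairing]
    linarith [h v₁ v₂, hξ₁ (v₂ - v₁), hξ₂ (v₁ - v₂)]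
  · intro h v₁ v₂
    obtain ⟨L₁, s₁, hs₁, hΨ₁⟩ := hΨlip v₁
    obtain ⟨L₂, s₂, hs₂, hΨ₂⟩ := hΨlip v₂
    obtain ⟨ξ₁, hξ₁, hξ₁_eq⟩ := exists_mem_clarkeSubdiff_apply_eq hs₁ hΨ₁ (v₂ - v₁)
    obtain ⟨ξ₂, hξ₂, hξ₂_eq⟩ := exists_mem_clarkeSubdiff_apply_eq hs₂ hΨ₂ (v₁ - v₂)
    have hmono := h v₁ v₂ ξ₁ hξ₁ ξ₂ hξ₂
    rw [pairing, hξ₁_eq, hξ₂_eq] at hmono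
    linarith

theorem stmt4 {X : Type*} [NormedAddCommGroup X] [NormedSpace ℝ X] [CompleteSpace X]
    (Ψ : X → ℝ)
    (hΨlip : ∀ u : X, ∃ (L : NNReal) (s : Set X), s ∈ 𝓝 u ∧ LipschitzOnWith L Ψ s)
    (α : ℝ) (hα : 0 ≤ α) :
    (∀ v₁ v₂ : X,
        clarkeDeriv Ψ v₁ (v₂ - v₁) + clarkeDeriv Ψ v₂ (v₁ - v₂) ≤ α * ‖v₁ - v₂‖ ^ 2) ↔
    (∀ v₁ v₂ : X, ∀ ξ₁ ∈ clarkeSubdiff Ψ v₁, ∀ ξ₂ ∈ clarkeSubdiff Ψ v₂,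
        (ξ₁ - ξ₂) (v₁ - v₂) ≥ -α * ‖v₁ - v₂‖ ^ 2) :=
  stmt4_general Ψ hΨlip α
end

section
/- Assume the abstract VHI data hypotheses with α_Ψ < m_A. Let f₁, f₂ ∈ V* and let u₁, u₂ ∈ K satisfy, for i = 1, 2, the inequality ⟨Au_i, v − u_i⟩ + Φ(v) − Φ(u_i) + Ψ⁰(u_i; v − u_i) ≥ ⟨f_i, v − u_i⟩ for all v ∈ K. Then ‖u₁ − u₂‖_V ≤ (m_A − α_Ψ)⁻¹ ‖f₁ − f₂‖_{V*}; in particular, the solution depends Lipschitz continuously on f. -/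
/-!
Test the inequality for `u₁` with `v = u₂` and the one for `u₂` with `v = u₁`, and add them: the
`Φ`-terms cancel, and strong monotonicity of `A` together with the relaxed monotonicity of `Ψ⁰`
leaves `(m_A - α_Ψ) ‖u₁ - u₂‖² ≤ ‖f₁ - f₂‖ ‖u₁ - u₂‖`.
-/

open Filter Topology

theorem le_inv_mul_of_mul_sq_le_mul {c b x : ℝ} (hc : 0 < c) (hb : 0 ≤ b) (hx : 0 ≤ x)
    (h : c * x ^ 2 ≤ b * x) : x ≤ c⁻¹ * b := by
  rcases hx.eq_or_lt with rfl | hx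
  · positivity
  · rw [le_inv_mul_iff₀ hc]
    nlinarith

theorem apply_sub_le_of_crossed_variational_ineq {V : Type*} [AddCommGroup V] [Module ℝ V]
    [TopologicalSpace V] {A : V → V →L[ℝ] ℝ} {Φ : V → ℝ} {D : V → V → ℝ}
    {f₁ f₂ : V →L[ℝ] ℝ} {u₁ u₂ : V}
    (h₁ : A u₁ (u₂ - u₁) + Φ u₂ - Φ u₁ + D u₁ (u₂ - u₁) ≥ f₁ (u₂ - u₁))
    (h₂ : A u₂ (u₁ - u₂) + Φ u₁ - Φ u₂ + D u₂ (u₁ - u₂) ≥ f₂ (u₁ - u₂)) :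
    (A u₁ - A u₂) (u₁ - u₂) ≤ (f₁ - f₂) (u₁ - u₂) + (D u₁ (u₂ - u₁) + D u₂ (u₁ - u₂)) := by
  simp only [sub_apply, map_sub] at *
  linarith

theorem stmt10_general {V : Type*} [NormedAddCommGroup V] [InnerProductSpace ℝ V]
    (K : Set V)
    (A : V → (V →L[ℝ] ℝ))
    (mA : ℝ)
    (hAmon : ∀ v₁ v₂ : V, (A v₁ - A v₂) (v₁ - v₂) ≥ mA * ‖v₁ - v₂‖ ^ 2)
    (Φ : V → ℝ)
    (Ψ : V → ℝ)
    (αΨ : ℝ)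
    (hΨmon : ∀ v₁ v₂ : V,
      clarkeDeriv Ψ v₁ (v₂ - v₁) + clarkeDeriv Ψ v₂ (v₁ - v₂) ≤ αΨ * ‖v₁ - v₂‖ ^ 2)
    (hsmall : αΨ < mA)
    (f₁ f₂ : V →L[ℝ] ℝ) (u₁ u₂ : V) (hu₁K : u₁ ∈ K) (hu₂K : u₂ ∈ K)
    (hu₁ : ∀ v ∈ K,
      (A u₁) (v - u₁) + Φ v - Φ u₁ + clarkeDeriv Ψ u₁ (v - u₁) ≥ f₁ (v - u₁))
    (hu₂ : ∀ v ∈ K,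
      (A u₂) (v - u₂) + Φ v - Φ u₂ + clarkeDeriv Ψ u₂ (v - u₂) ≥ f₂ (v - u₂)) :
    ‖u₁ - u₂‖ ≤ (mA - αΨ)⁻¹ * ‖f₁ - f₂‖ := by
  have hcross := apply_sub_le_of_crossed_variational_ineq (hu₁ u₂ hu₂K) (hu₂ u₁ hu₁K)
  have hf : (f₁ - f₂) (u₁ - u₂) ≤ ‖f₁ - f₂‖ * ‖u₁ - u₂‖ :=
    (le_abs_self _).trans ((f₁ - f₂).le_opNorm _)
  have hkey : (mA - αΨ) * ‖u₁ - u₂‖ ^ 2 ≤ ‖f₁ - f₂‖ * ‖u₁ - u₂‖ := by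
    linarith [hAmon u₁ u₂, hΨmon u₁ u₂]
  exact le_inv_mul_of_mul_sq_le_mul (sub_pos.2 hsmall) (norm_nonneg _) (norm_nonneg _) hkey

theorem stmt10 {V : Type*} [NormedAddCommGroup V] [InnerProductSpace ℝ V] [CompleteSpace V]
    (K : Set V) (hKne : K.Nonempty) (hKcl : IsClosed K) (hKcv : Convex ℝ K)
    (A : V → (V →L[ℝ] ℝ)) (LA : ℝ) (hLA : 0 < LA)
    (hALip : ∀ v₁ v₂ : V, ‖A v₁ - A v₂‖ ≤ LA * ‖v₁ - v₂‖)
    (mA : ℝ) (hmA : 0 < mA)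
    (hAmon : ∀ v₁ v₂ : V, (A v₁ - A v₂) (v₁ - v₂) ≥ mA * ‖v₁ - v₂‖ ^ 2)
    (Φ : V → ℝ) (hΦcv : ConvexOn ℝ Set.univ Φ) (hΦcont : Continuous Φ)
    (Ψ : V → ℝ)
    (hΨlip : ∀ u : V, ∃ (L : NNReal) (s : Set V), s ∈ 𝓝 u ∧ LipschitzOnWith L Ψ s)
    (αΨ : ℝ) (hαΨ : 0 ≤ αΨ)
    (hΨmon : ∀ v₁ v₂ : V,
      clarkeDeriv Ψ v₁ (v₂ - v₁) + clarkeDeriv Ψ v₂ (v₁ - v₂) ≤ αΨ * ‖v₁ - v₂‖ ^ 2)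
    (hsmall : αΨ < mA)
    (f₁ f₂ : V →L[ℝ] ℝ) (u₁ u₂ : V) (hu₁K : u₁ ∈ K) (hu₂K : u₂ ∈ K)
    (hu₁ : ∀ v ∈ K,
      (A u₁) (v - u₁) + Φ v - Φ u₁ + clarkeDeriv Ψ u₁ (v - u₁) ≥ f₁ (v - u₁))
    (hu₂ : ∀ v ∈ K,
      (A u₂) (v - u₂) + Φ v - Φ u₂ + clarkeDeriv Ψ u₂ (v - u₂) ≥ f₂ (v - u₂)) :
    ‖u₁ - u₂‖ ≤ (mA - αΨ)⁻¹ * ‖f₁ - f₂‖ :=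
  stmt10_general K A mA hAmon Φ Ψ αΨ hΨmon hsmall f₁ f₂ u₁ u₂ hu₁K hu₂K hu₁ hu₂
end
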